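/- For any α ∈ (1,2) and β > 0, and any C > 0, there exist μ ∈ ℝ and σ > 0 such that for R ~ InverseGamma(α, β) and R' ~ LogNormal(μ, σ²): E[R] = E[R'], Var(R) = ∞, Var(R') < ∞, and E[log R] − E[log R'] > C. -/

import Mathlib

/-!
A log-normal law with parameters `(μ, σ²)` has mean `exp (μ + σ² / 2)`, logarithmic mean `μ`
and moments of every order. Fixing its mean at the inverse-gamma mean `β / (α - 1)` forces
`σ² = 2 (log (β / (α - 1)) - μ)`, which leaves `μ` free to go to `-∞`; this makes
`E[log R] - E[log R']` as large as we like. The inverse-gamma second moment is the `(-2)`-nd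
moment of `Gamma(α, β)`, whose integrand behaves like `x ^ (α - 3)` at `0` and is therefore not
integrable when `α ≤ 2`.
-/

open MeasureTheory ProbabilityTheory
open scoped NNReal ENNReal

/-- The inverse gamma distribution with shape `α` and scale `β`. -/
noncomputable def invGammaMeasure (α β : ℝ) : Measure ℝ :=
  Measure.map (fun x => x⁻¹) (gammaMeasure α β)

/-- The log-normal distribution `LogNormal(μ, σ²)`. -/
noncomputable def logNormalMeasure (μ : ℝ) (v : ℝ≥0) : Measure ℝ :=
  Measure.map Real.exp (gaussianReal μ v)

open Real Set

namespace ProbabilityTheory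

section Gamma

variable {a r : ℝ}

lemma toReal_gammaPDF (ha : 0 < a) (hr : 0 < r) (x : ℝ) :
    (gammaPDF a r x).toReal = gammaPDFReal a r x :=
  ENNReal.toReal_ofReal (gammaPDFReal_nonneg ha hr x)

lemma integral_gammaMeasure (ha : 0 < a) (hr : 0 < r) (g : ℝ → ℝ) :
    ∫ x, g x ∂gammaMeasure a r = ∫ x, gammaPDFReal a r x * g x := by
  rw [gammaMeasure, integral_withDensity_eq_integral_toReal_smul (f := gammaPDF a r)
    (measurable_gammaPDFReal a r).ennreal_ofReal (ae_of_all _ fun _ => ENNReal.ofReal_lt_top)]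
  simp_rw [toReal_gammaPDF ha hr, smul_eq_mul]

lemma integrable_gammaMeasure_iff (ha : 0 < a) (hr : 0 < r) {g : ℝ → ℝ} :
    Integrable g (gammaMeasure a r) ↔ Integrable (fun x => gammaPDFReal a r x * g x) := by
  rw [gammaMeasure, integrable_withDensity_iff_integrable_smul' (f := gammaPDF a r)
    (measurable_gammaPDFReal a r).ennreal_ofReal (ae_of_all _ fun _ => ENNReal.ofReal_lt_top)]
  simp_rw [toReal_gammaPDF ha hr, smul_eq_mul]

lemma gammaPDFReal_mul_rpow {x : ℝ} (hx : 0 < x) (s : ℝ) :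
    gammaPDFReal a r x * x ^ s = r ^ a / Gamma a * (x ^ (a + s - 1) * exp (-(r * x))) := by
  rw [gammaPDFReal, if_pos hx.le, show a + s - 1 = a - 1 + s by ring, rpow_add hx]
  ring

lemma integral_rpow_gammaMeasure (ha : 0 < a) (hr : 0 < r) {s : ℝ} (has : 0 < a + s) :
    ∫ x, x ^ s ∂gammaMeasure a r = Gamma (a + s) / (Gamma a * r ^ s) := by
  have hvanish : ∀ x ∉ Ici (0 : ℝ), gammaPDFReal a r x * x ^ s = 0 := fun x hx => by
    rw [gammaPDFReal, if_neg (by simpa using hx), zero_mul]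
  rw [integral_gammaMeasure ha hr, ← setIntegral_eq_integral_of_forall_compl_eq_zero hvanish,
    integral_Ici_eq_integral_Ioi, setIntegral_congr_fun measurableSet_Ioi
      fun x hx => gammaPDFReal_mul_rpow hx s,
    integral_const_mul, integral_rpow_mul_exp_neg_mul_Ioi has hr, one_div, inv_rpow hr.le,
    rpow_add hr]
  have := Gamma_pos_of_pos ha
  have := rpow_pos_of_pos hr a
  have := rpow_pos_of_pos hr s
  field_simp

lemma integral_inv_gammaMeasure (ha : 1 < a) (hr : 0 < r) :
    ∫ x, x⁻¹ ∂gammaMeasure a r = r / (a - 1) := by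
  have hGamma : Gamma a = (a - 1) * Gamma (a - 1) := by
    simpa using Gamma_add_one (s := a - 1) (by linarith)
  have := Gamma_pos_of_pos (show 0 < a - 1 by linarith)
  simp_rw [← rpow_neg_one]
  rw [integral_rpow_gammaMeasure (by linarith) hr (by linarith), ← sub_eq_add_neg, hGamma,
    rpow_neg_one]
  field_simp

lemma not_integrable_rpow_gammaMeasure (ha : 0 < a) (hr : 0 < r) {s : ℝ} (hs : s ≤ -a) :
    ¬ Integrable (fun x => x ^ s) (gammaMeasure a r) := by
  intro h
  rw [integrable_gammaMeasure_iff ha hr] at h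
  -- on `(0, 1)`, `exp (-(r * x)) ≥ exp (-r)`: the integrand dominates a multiple of
  -- `x ^ (a + s - 1)`
  have hloc : IntegrableOn (fun x : ℝ => x ^ (a + s - 1)) (Ioo 0 1) := by
    refine ((h.const_mul (Gamma a * exp r / r ^ a)).integrableOn).mono'
      (by fun_prop) ((ae_restrict_iff' measurableSet_Ioo).2 (ae_of_all _ fun x hx => ?_))
    rw [gammaPDFReal_mul_rpow hx.1, norm_of_nonneg (rpow_nonneg hx.1.le _)]
    have := Gamma_pos_of_pos ha
    have := rpow_pos_of_pos hr a
    have hexp : 1 ≤ exp r * exp (-(r * x)) := by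
      rw [← exp_add, one_le_exp_iff]; nlinarith [hx.2]
    calc x ^ (a + s - 1) ≤ x ^ (a + s - 1) * (exp r * exp (-(r * x))) :=
          le_mul_of_one_le_right (rpow_nonneg hx.1.le _) hexp
      _ = _ := by field_simp
  rw [intervalIntegral.integrableOn_Ioo_rpow_iff one_pos] at hloc
  linarith

end Gamma

lemma HasLaw.evariance_lt_top_iff {Ω : Type*} [MeasurableSpace Ω] {P : Measure Ω}
    [IsFiniteMeasure P] {X : Ω → ℝ} {μ : Measure ℝ} (hX : HasLaw X μ P) :
    evariance X P < ∞ ↔ Integrable (fun x => x ^ 2) μ := by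
  rw [evariance_lt_top_iff_memLp hX.aemeasurable.aestronglyMeasurable,
    memLp_two_iff_integrable_sq hX.aemeasurable.aestronglyMeasurable, ← hX.map_eq,
    integrable_map_measure (by fun_prop) hX.aemeasurable]
  rfl

section InverseGamma

variable {α β : ℝ}

lemma isProbabilityMeasure_invGammaMeasure (hα : 0 < α) (hβ : 0 < β) :
    IsProbabilityMeasure (invGammaMeasure α β) :=
  have := isProbabilityMeasure_gammaMeasure hα hβ
  Measure.isProbabilityMeasure_map measurable_inv.aemeasurable

lemma integral_id_invGammaMeasure (hα : 1 < α) (hβ : 0 < β) :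
    ∫ x, x ∂invGammaMeasure α β = β / (α - 1) := by
  rw [invGammaMeasure, integral_map measurable_inv.aemeasurable measurable_id'.aestronglyMeasurable]
  exact integral_inv_gammaMeasure hα hβ

lemma not_integrable_sq_invGammaMeasure (hα : 0 < α) (hα2 : α ≤ 2) (hβ : 0 < β) :
    ¬ Integrable (fun x => x ^ 2) (invGammaMeasure α β) := by
  rw [invGammaMeasure, integrable_map_measure (by fun_prop) measurable_inv.aemeasurable]
  convert not_integrable_rpow_gammaMeasure hα hβ (s := -2) (by linarith) using 2 with x
  simp [Function.comp_def, rpow_neg_ofNat]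

end InverseGamma

section LogNormal

variable {μ : ℝ} {v : ℝ≥0}

instance : IsProbabilityMeasure (logNormalMeasure μ v) :=
  Measure.isProbabilityMeasure_map measurable_exp.aemeasurable

lemma integral_id_logNormalMeasure : ∫ x, x ∂logNormalMeasure μ v = exp (μ + v / 2) := by
  rw [logNormalMeasure,
    integral_map measurable_exp.aemeasurable measurable_id'.aestronglyMeasurable]
  simpa [mgf] using congrFun (mgf_id_gaussianReal (μ := μ) (v := v)) 1

lemma integral_log_logNormalMeasure : ∫ x, log x ∂logNormalMeasure μ v = μ := by
  rw [logNormalMeasure, integral_map measurable_exp.aemeasurable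
    measurable_log.aestronglyMeasurable]
  simp

lemma integrable_sq_logNormalMeasure : Integrable (fun x => x ^ 2) (logNormalMeasure μ v) := by
  rw [logNormalMeasure, integrable_map_measure (by fun_prop) measurable_exp.aemeasurable]
  convert integrable_exp_mul_gaussianReal (μ := μ) (v := v) 2 using 2 with x
  simp [← exp_nat_mul]

end LogNormal

end ProbabilityTheory

theorem invGamma_vs_logNormal_general (α β C : ℝ) (hα : 1 < α) (hα2 : α < 2)
    (hβ : 0 < β) :
    ∃ (μ : ℝ) (σ : ℝ≥0), 0 < σ ∧
      ∀ {Ω : Type} [MeasurableSpace Ω] (P : Measure Ω),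
        IsProbabilityMeasure P →
        ∀ (R R' : Ω → ℝ),
          Measure.map R P = invGammaMeasure α β →
          Measure.map R' P = logNormalMeasure μ (σ ^ 2) →
          (∫ ω, R ω ∂P) = (∫ ω, R' ω ∂P)
            ∧ evariance R P = ∞
            ∧ evariance R' P < ∞
            ∧ C < (∫ ω, Real.log (R ω) ∂P) - ∫ ω, Real.log (R' ω) ∂P := by
  set m := β / (α - 1)
  set L := ∫ x, log x ∂invGammaMeasure α β
  set t := |log m - L + C| + 1
  have ht : 0 < t := by positivity
  set σ := NNReal.sqrt (2 * t).toNNReal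
  have hσ : ((σ ^ 2 : ℝ≥0) : ℝ) = 2 * t := by
    simp [σ, NNReal.sq_sqrt, ht.le]
  refine ⟨log m - t, σ, by simp [σ, ht], fun P _ R R' hRmap hR'map => ?_⟩
  have hα0 : 0 < α := by linarith
  have := isProbabilityMeasure_invGammaMeasure hα0 hβ
  have hR : HasLaw R (invGammaMeasure α β) P :=
    ⟨aemeasurable_of_map_neZero (by rw [hRmap]; infer_instance), hRmap⟩
  have hR' : HasLaw R' (logNormalMeasure (log m - t) (σ ^ 2)) P :=
    ⟨aemeasurable_of_map_neZero (by rw [hR'map]; infer_instance), hR'map⟩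
  have hm : 0 < m := div_pos hβ (by linarith)
  refine ⟨?_, ?_, ?_, ?_⟩
  · rw [hR.integral_eq, hR'.integral_eq, integral_id_invGammaMeasure hα hβ,
      integral_id_logNormalMeasure, hσ, show log m - t + 2 * t / 2 = log m by ring,
      exp_log hm]
  · rw [← not_lt_top_iff, hR.evariance_lt_top_iff]
    exact not_integrable_sq_invGammaMeasure hα0 hα2.le hβ
  · exact hR'.evariance_lt_top_iff.2 integrable_sq_logNormalMeasure
  · have hlog := hR.integral_comp measurable_log.aestronglyMeasurable
    have hlog' := hR'.integral_comp measurable_log.aestronglyMeasurable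
    rw [Function.comp_def] at hlog hlog'
    rw [hlog, hlog', integral_log_logNormalMeasure]
    linarith [le_abs_self (log m - L + C)]

/-- infinitely worse variance can coexist with an arbitrarily
better bound: for any inverse-gamma `R` with `α ∈ (1,2)` there is a log-normal
`R'` with the same mean, finite variance (while `Var R = ∞`), and
`E[log R] − E[log R'] > C`. -/
theorem invGamma_vs_logNormal (α β C : ℝ) (hα : 1 < α) (hα2 : α < 2)
    (hβ : 0 < β) (hC : 0 < C) :
    ∃ (μ : ℝ) (σ : ℝ≥0), 0 < σ ∧
      ∀ {Ω : Type} [MeasurableSpace Ω] (P : Measure Ω),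
        IsProbabilityMeasure P →
        ∀ (R R' : Ω → ℝ),
          Measure.map R P = invGammaMeasure α β →
          Measure.map R' P = logNormalMeasure μ (σ ^ 2) →
          (∫ ω, R ω ∂P) = (∫ ω, R' ω ∂P)
            ∧ evariance R P = ∞
            ∧ evariance R' P < ∞
            ∧ C < (∫ ω, Real.log (R ω) ∂P) - ∫ ω, Real.log (R' ω) ∂P :=
  invGamma_vs_logNormal_general α β C hα hα2 hβ
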